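/- arXiv:1211.5559 — 5 statements merged into one kernel-verified Lean document; each statement's English description precedes it below -/
import Mathlib

section
/- For every t > 0 and x ∈ ℝⁿ, the function ρ_t(x) = ((2π(e^{2tk}-1))/(k e^{2tk}))^{-n/2} · exp(-k|x|²/(2(e^{2tk}-1))) satisfies the parabolic equation ∂_t ρ_t = Δρ_t - k⟨x, ∇ρ_t⟩, where k > 0 is a constant. -/
/-!
With `a = exp (2 t k) - 1` the kernel at time `t` is the radial Gaussian `A exp (-c ‖x‖²)` with
`c = k / (2 a)`. For such a Gaussian `Δρ = (4 c² ‖x‖² - 2 n c) ρ` and `⟨x, ∇ρ⟩ = -2 c ‖x‖² ρ`, while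
`a' = 2 k (a + 1)` gives `∂ₜρ = (k² (a + 1) ‖x‖² / a² - n k / a) ρ`; the two sides then agree
identically.
-/

open Real Set Filter

noncomputable def lap (n : ℕ) (f : EuclideanSpace ℝ (Fin n) → ℝ) (x : EuclideanSpace ℝ (Fin n)) : ℝ :=
  ∑ i, fderiv ℝ (fun y => fderiv ℝ f y (EuclideanSpace.single i 1)) x (EuclideanSpace.single i 1)

open scoped RealInnerProductSpace

section Gaussian

variable {E : Type*} [NormedAddCommGroup E] [InnerProductSpace ℝ E]

noncomputable def radialGaussian (c A : ℝ) (z : E) : ℝ :=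
  A * exp (-c * ‖z‖ ^ 2)

theorem hasFDerivAt_radialGaussian (c A : ℝ) (y : E) :
    HasFDerivAt (radialGaussian c A) ((-2 * c * radialGaussian c A y) • innerSL ℝ y) y := by
  have h := ((hasStrictFDerivAt_norm_sq y).hasFDerivAt.const_mul (-c)).exp.const_mul A
  refine h.congr_fderiv ?_
  ext z
  simp only [radialGaussian, smul_apply, coe_innerSL_apply, smul_eq_mul, nsmul_eq_mul,
    Nat.cast_ofNat]
  ring

theorem fderiv_radialGaussian_apply (c A : ℝ) (y v : E) :
    fderiv ℝ (radialGaussian c A) y v = -2 * c * radialGaussian c A y * ⟪y, v⟫ := by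
  simp [(hasFDerivAt_radialGaussian c A y).fderiv]

theorem gradient_radialGaussian [CompleteSpace E] (c A : ℝ) (x : E) :
    gradient (radialGaussian c A) x = (-2 * c * radialGaussian c A x) • x := by
  refine (hasGradientAt_iff_hasFDerivAt.2 ?_).gradient
  refine (hasFDerivAt_radialGaussian c A x).congr_fderiv ?_
  ext z
  simp

theorem fderiv_fderiv_radialGaussian_apply (c A : ℝ) (x v : E) :
    fderiv ℝ (fun y => fderiv ℝ (radialGaussian c A) y v) x v =
      radialGaussian c A x * (4 * c ^ 2 * ⟪x, v⟫ ^ 2 - 2 * c * ‖v‖ ^ 2) := by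
  simp_rw [fderiv_radialGaussian_apply]
  have h := ((hasFDerivAt_radialGaussian c A x).const_mul (-2 * c)).mul
    ((innerSL ℝ v).hasFDerivAt (x := x))
  rw [(h.congr_of_eventuallyEq (Eventually.of_forall fun y => ?_)).fderiv]
  · simp only [add_apply, smul_apply, coe_innerSL_apply, smul_eq_mul,
      real_inner_comm x, real_inner_self_eq_norm_sq]
    ring
  · simp [real_inner_comm, mul_assoc]

end Gaussian

theorem lap_radialGaussian (n : ℕ) (c A : ℝ) (x : EuclideanSpace ℝ (Fin n)) :
    lap n (radialGaussian c A) x = radialGaussian c A x * (4 * c ^ 2 * ‖x‖ ^ 2 - 2 * c * n) := by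
  simp only [lap, fderiv_fderiv_radialGaussian_apply, EuclideanSpace.inner_single_right,
    PiLp.norm_single, ← Finset.mul_sum, Finset.sum_sub_distrib]
  simp [EuclideanSpace.norm_sq_eq]

section TimeFactors

variable {k t : ℝ}

theorem exp_two_mul_mul_sub_one_ne_zero (hk : k ≠ 0) (ht : t ≠ 0) : exp (2 * t * k) - 1 ≠ 0 := by
  rw [sub_ne_zero, Ne, exp_eq_one_iff]
  positivity

theorem hasDerivAt_exp_two_mul_mul (k t : ℝ) :
    HasDerivAt (fun s => exp (2 * s * k)) (2 * k * exp (2 * t * k)) t := by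
  simpa [mul_comm] using (((hasDerivAt_id t).const_mul 2).mul_const k).exp

theorem hasDerivAt_rpow_normalization (p : ℝ) (hk : k ≠ 0) (ht : t ≠ 0) :
    HasDerivAt (fun s => (2 * π * (exp (2 * s * k) - 1) / (k * exp (2 * s * k))) ^ p)
      (p * (2 * k / (exp (2 * t * k) - 1)) *
        (2 * π * (exp (2 * t * k) - 1) / (k * exp (2 * t * k))) ^ p) t := by
  have ha := exp_two_mul_mul_sub_one_ne_zero hk ht
  have he := hasDerivAt_exp_two_mul_mul k t
  have hB : HasDerivAt (fun s => 2 * π * (exp (2 * s * k) - 1) / (k * exp (2 * s * k))) _ t :=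
    ((he.sub_const 1).const_mul (2 * π)).div (he.const_mul k) (by positivity)
  have hB0 : 2 * π * (exp (2 * t * k) - 1) / (k * exp (2 * t * k)) ≠ 0 := by positivity
  convert hB.rpow_const (p := p) (Or.inl hB0) using 1
  rw [rpow_sub_one hB0]
  field_simp
  ring

theorem hasDerivAt_exp_neg_div (C : ℝ) (hk : k ≠ 0) (ht : t ≠ 0) :
    HasDerivAt (fun s => exp (-k * C / (2 * (exp (2 * s * k) - 1))))
      (k ^ 2 * exp (2 * t * k) * C / (exp (2 * t * k) - 1) ^ 2 *
        exp (-k * C / (2 * (exp (2 * t * k) - 1)))) t := by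
  have ha := exp_two_mul_mul_sub_one_ne_zero hk ht
  have h : HasDerivAt (fun s => -k * C / (2 * (exp (2 * s * k) - 1))) _ t :=
    (hasDerivAt_const t (-k * C)).div
      (((hasDerivAt_exp_two_mul_mul k t).sub_const 1).const_mul 2) (by positivity)
  convert h.exp using 1
  field_simp
  ring

end TimeFactors

theorem stmt0 (n : ℕ) (k : ℝ) (hk : 0 < k)
    (ρ : ℝ → EuclideanSpace ℝ (Fin n) → ℝ)
    (hρ : ∀ t x, ρ t x =
      ((2 * π * (Real.exp (2 * t * k) - 1)) / (k * Real.exp (2 * t * k))) ^ (-(n : ℝ) / 2) *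
        Real.exp (-k * ‖x‖ ^ 2 / (2 * (Real.exp (2 * t * k) - 1)))) :
    ∀ t, 0 < t → ∀ x,
      deriv (fun s => ρ s x) t = lap n (ρ t) x - k * inner ℝ x (gradient (ρ t) x) := by
  intro t ht x
  have ha := exp_two_mul_mul_sub_one_ne_zero hk.ne' ht.ne'
  have hρ_gaussian : ρ t = radialGaussian (k / (2 * (exp (2 * t * k) - 1)))
      ((2 * π * (exp (2 * t * k) - 1) / (k * exp (2 * t * k))) ^ (-(n : ℝ) / 2)) := by
    funext y
    rw [hρ, radialGaussian]
    ring_nf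
  have htime := (hasDerivAt_rpow_normalization (-(n : ℝ) / 2) hk.ne' ht.ne').mul
    (hasDerivAt_exp_neg_div (‖x‖ ^ 2) hk.ne' ht.ne')
  rw [hρ_gaussian, lap_radialGaussian, gradient_radialGaussian, real_inner_smul_right,
    real_inner_self_eq_norm_sq]
  rw [(htime.congr_of_eventuallyEq (.of_forall fun s => hρ s x)).deriv, radialGaussian]
  field_simp
  ring
end

section
/- For k > 0 and the solution ρ_t(x) = ((2π(e^{2tk}-1))/(k e^{2tk}))^{-n/2} exp(-k|x|²/(2(e^{2tk}-1))) of ∂_t ρ_t = Δρ_t - k⟨x,∇ρ_t⟩ on ℝⁿ, one has the identity Δ log ρ_t - (k n)/2 = -(n k / 2) coth(k t) for all t > 0 and x ∈ ℝⁿ. -/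
/-!
Up to an additive constant, `log ρ_t` is the quadratic `-k ‖x‖² / (2 (e^{2kt} - 1))`, whose Laplacian
is `-n k / (e^{2kt} - 1)`; the identity is then `coth x = 1 + 2 / (e^{2x} - 1)`.
-/

open Real Set Filter

noncomputable def coth (x : ℝ) : ℝ := Real.cosh x / Real.sinh x

theorem fderiv_const_add_mul_norm_sq_apply {F : Type*} [NormedAddCommGroup F]
    [InnerProductSpace ℝ F] (C a : ℝ) (y v : F) :
    fderiv ℝ (fun y : F => C + a * ‖y‖ ^ 2) y v = 2 * a * inner ℝ y v := by
  have h := ((hasStrictFDerivAt_norm_sq y).hasFDerivAt.const_mul a).const_add C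
  rw [h.fderiv]
  simp only [smul_apply, innerSL_apply_apply, smul_eq_mul, nsmul_eq_mul]
  push_cast
  ring

theorem lap_const_add_mul_norm_sq (n : ℕ) (C a : ℝ) (x : EuclideanSpace ℝ (Fin n)) :
    lap n (fun y => C + a * ‖y‖ ^ 2) x = 2 * a * n := by
  have hpartial (i : Fin n) :
      (fun y => fderiv ℝ (fun y => C + a * ‖y‖ ^ 2) y (EuclideanSpace.single i 1))
        = (2 * a) • EuclideanSpace.proj (𝕜 := ℝ) i := by
    ext y
    rw [fderiv_const_add_mul_norm_sq_apply, EuclideanSpace.inner_single_right]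
    simp
  simp only [lap, hpartial, ContinuousLinearMap.fderiv]
  simp [mul_comm]

theorem coth_eq_one_add_two_div {x : ℝ} (hx : x ≠ 0) :
    coth x = 1 + 2 / (exp (2 * x) - 1) := by
  have hE : exp x ^ 2 - 1 ≠ 0 := by
    rw [← exp_nat_mul, sub_ne_zero, Ne, exp_eq_one_iff]; simpa using hx
  rw [coth, cosh_eq, sinh_eq, exp_neg, show 2 * x = (2 : ℕ) * x by norm_num, exp_nat_mul]
  have := exp_pos x
  field_simp
  ring

theorem stmt1 (n : ℕ) (k : ℝ) (hk : 0 < k)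
    (ρ : ℝ → EuclideanSpace ℝ (Fin n) → ℝ)
    (hρ : ∀ t x, ρ t x =
      ((2 * π * (Real.exp (2 * t * k) - 1)) / (k * Real.exp (2 * t * k))) ^ (-(n : ℝ) / 2) *
        Real.exp (-k * ‖x‖ ^ 2 / (2 * (Real.exp (2 * t * k) - 1)))) :
    ∀ t, 0 < t → ∀ x,
      lap n (fun y => Real.log (ρ t y)) x - k * n / 2 = -(n * k / 2) * coth (k * t) := by
  intro t ht x
  set E := exp (2 * t * k) with hE_def
  have hE : 0 < E - 1 := sub_pos.mpr (one_lt_exp_iff.mpr (by positivity))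
  have hc : 0 < ((2 * π * (E - 1)) / (k * E)) ^ (-(n : ℝ) / 2) := by
    have := pi_pos
    positivity
  have hlog : (fun y => log (ρ t y)) = fun y =>
      log (((2 * π * (E - 1)) / (k * E)) ^ (-(n : ℝ) / 2)) + (-k / (2 * (E - 1))) * ‖y‖ ^ 2 := by
    ext y
    rw [hρ, log_mul hc.ne' (exp_ne_zero _), log_exp]
    ring
  rw [hlog, lap_const_add_mul_norm_sq, coth_eq_one_add_two_div (by positivity),
    show 2 * (k * t) = 2 * t * k by ring, ← hE_def]
  field_simp
  ring
end

section
/- On ℝⁿ with U₁ ≡ 0 and U₂(x) = -(k²/2)|x|², the cost function c_{0,t}(0,x) = inf_{γ(0)=0, γ(t)=x} ∫₀ᵗ (1/2)|γ'(s)|² - U₂(γ(s)) ds satisfies Hess_x c_{0,t}(0,x) = k coth(kt) · I and Δ_x c_{0,t}(0,x) = k n coth(kt) for all t > 0 and x ∈ ℝⁿ. -/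
/-!
The action density `½|γ'|² + (k²/2)|γ|²` is a convex quadratic form in `(γ', γ)`, and its
Euler–Lagrange equation is `γ'' = k² γ`. A solution `γ₀` therefore calibrates the action:
the first-order term of the action at `γ₀` is the total derivative of `⟪γ₀', γ - γ₀⟫`, which vanishes
for curves with the same endpoints, so `γ₀` minimises. Between `0` and `x` at time `t` the solution
is `γ₀ s = sinh (k s) / sinh (k t) • x`, and since `⟪γ₀', γ₀⟫' = 2 L(γ₀', γ₀)` its action is
`½ ⟪γ₀' t, x⟫ = (k/2) coth (k t) |x|²`. The cost is thus a multiple of `|x|²`, whose Hessian is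
`k coth (k t) · I`.
-/

open Real Set Filter

open MeasureTheory

section HarmonicAction

variable {E : Type*} [NormedAddCommGroup E]

/-- `½|p|² - U(q)` for the potential `U(q) = -(k²/2)|q|²`. -/
noncomputable def harmonicLagrangian (k : ℝ) (p q : E) : ℝ :=
  1 / 2 * ‖p‖ ^ 2 + k ^ 2 / 2 * ‖q‖ ^ 2

theorem continuous_harmonicLagrangian_comp {k : ℝ} {v γ : ℝ → E} (hv : Continuous v)
    (hγ : Continuous γ) : Continuous fun s => harmonicLagrangian k (v s) (γ s) := by
  unfold harmonicLagrangian; fun_prop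

variable [InnerProductSpace ℝ E]

theorem harmonicLagrangian_add_inner_le (k : ℝ) (p₀ q₀ p q : E) :
    harmonicLagrangian k p₀ q₀ + (inner ℝ p₀ (p - p₀) + inner ℝ (k ^ 2 • q₀) (q - q₀))
      ≤ harmonicLagrangian k p q := by
  have hremainder : harmonicLagrangian k p q
      = harmonicLagrangian k p₀ q₀ + (inner ℝ p₀ (p - p₀) + inner ℝ (k ^ 2 • q₀) (q - q₀))
        + harmonicLagrangian k (p - p₀) (q - q₀) := by
    simp only [harmonicLagrangian, norm_sub_sq_real, inner_sub_right, real_inner_smul_left,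
      real_inner_smul_right, real_inner_self_eq_norm_sq, real_inner_comm p₀, real_inner_comm q₀]
    ring
  have hnonneg : 0 ≤ harmonicLagrangian k (p - p₀) (q - q₀) := by
    unfold harmonicLagrangian; positivity
  linarith

variable {k a b : ℝ} {γ₀ v₀ : ℝ → E}

theorem integral_harmonicLagrangian_of_eulerLagrange (hγ₀ : ∀ s, HasDerivAt γ₀ (v₀ s) s)
    (hv₀ : ∀ s, HasDerivAt v₀ (k ^ 2 • γ₀ s) s) :
    ∫ s in a..b, harmonicLagrangian k (v₀ s) (γ₀ s)
      = (inner ℝ (v₀ b) (γ₀ b) - inner ℝ (v₀ a) (γ₀ a)) / 2 := by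
  have hderiv : ∀ s, HasDerivAt (fun s => inner ℝ (v₀ s) (γ₀ s) / 2)
      (harmonicLagrangian k (v₀ s) (γ₀ s)) s := fun s =>
    (((hv₀ s).inner ℝ (hγ₀ s)).div_const 2).congr_deriv (by
      simp only [harmonicLagrangian, real_inner_smul_left, real_inner_self_eq_norm_sq]
      ring)
  have hcont : Continuous fun s => harmonicLagrangian k (v₀ s) (γ₀ s) :=
    continuous_harmonicLagrangian_comp
      (continuous_iff_continuousAt.2 fun s => (hv₀ s).continuousAt)
      (continuous_iff_continuousAt.2 fun s => (hγ₀ s).continuousAt)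
  rw [intervalIntegral.integral_eq_sub_of_hasDerivAt (fun s _ => hderiv s)
    (hcont.intervalIntegrable a b)]
  ring

theorem integral_harmonicLagrangian_le_of_eulerLagrange (hab : a ≤ b)
    (hγ₀ : ∀ s, HasDerivAt γ₀ (v₀ s) s) (hv₀ : ∀ s, HasDerivAt v₀ (k ^ 2 • γ₀ s) s)
    {γ : ℝ → E} (hγ : ContDiff ℝ 1 γ) (hγa : γ a = γ₀ a) (hγb : γ b = γ₀ b) :
    ∫ s in a..b, harmonicLagrangian k (v₀ s) (γ₀ s)
      ≤ ∫ s in a..b, harmonicLagrangian k (deriv γ s) (γ s) := by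
  have hcont₀ : Continuous γ₀ := continuous_iff_continuousAt.2 fun s => (hγ₀ s).continuousAt
  have hcontv₀ : Continuous v₀ := continuous_iff_continuousAt.2 fun s => (hv₀ s).continuousAt
  have hcontγ' : Continuous (deriv γ) := hγ.continuous_deriv le_rfl
  set firstVariation : ℝ → ℝ := fun s =>
    inner ℝ (v₀ s) (deriv γ s - v₀ s) + inner ℝ (k ^ 2 • γ₀ s) (γ s - γ₀ s)
  have hfirstVariation_cont : Continuous firstVariation := by fun_prop
  have hfirstVariation : ∫ s in a..b, firstVariation s = 0 := by
    have hderiv : ∀ s, HasDerivAt (fun s => inner ℝ (v₀ s) (γ s - γ₀ s)) (firstVariation s) s :=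
      fun s => (hv₀ s).inner ℝ (((hγ.differentiable one_ne_zero s).hasDerivAt).sub (hγ₀ s))
    rw [intervalIntegral.integral_eq_sub_of_hasDerivAt (fun s _ => hderiv s)
      (hfirstVariation_cont.intervalIntegrable a b)]
    simp [hγa, hγb]
  have hL₀ : IntervalIntegrable (fun s => harmonicLagrangian k (v₀ s) (γ₀ s)) volume a b :=
    (continuous_harmonicLagrangian_comp hcontv₀ hcont₀).intervalIntegrable a b
  calc ∫ s in a..b, harmonicLagrangian k (v₀ s) (γ₀ s)
      = ∫ s in a..b, (harmonicLagrangian k (v₀ s) (γ₀ s) + firstVariation s) := by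
        rw [intervalIntegral.integral_add hL₀ (hfirstVariation_cont.intervalIntegrable a b),
          hfirstVariation, add_zero]
    _ ≤ ∫ s in a..b, harmonicLagrangian k (deriv γ s) (γ s) :=
        intervalIntegral.integral_mono_on hab
          (hL₀.add (hfirstVariation_cont.intervalIntegrable a b))
          ((continuous_harmonicLagrangian_comp hcontγ' hγ.continuous).intervalIntegrable a b)
          fun s _ => harmonicLagrangian_add_inner_le k _ _ _ _

end HarmonicAction

section QuadraticCost

variable {E : Type*} [NormedAddCommGroup E] [InnerProductSpace ℝ E]

theorem hasDerivAt_sinh_mul_smul (k : ℝ) (y : E) (s : ℝ) :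
    HasDerivAt (fun s => sinh (k * s) • y) ((k * cosh (k * s)) • y) s := by
  simpa [mul_comm] using (((hasDerivAt_id s).const_mul k).sinh).smul_const y

theorem hasDerivAt_mul_cosh_mul_smul (k : ℝ) (y : E) (s : ℝ) :
    HasDerivAt (fun s => (k * cosh (k * s)) • y) (k ^ 2 • sinh (k * s) • y) s := by
  convert ((((hasDerivAt_id' s).const_mul k).cosh).const_mul k).smul_const y using 1
  module

theorem isLeast_integral_harmonicLagrangian {k t : ℝ} (hk : k ≠ 0) (ht : 0 < t) (x : E) :
    IsLeast {a | ∃ γ : ℝ → E, ContDiff ℝ 1 γ ∧ γ 0 = 0 ∧ γ t = x ∧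
        a = ∫ s in (0 : ℝ)..t, harmonicLagrangian k (deriv γ s) (γ s)}
      (k * coth (k * t) / 2 * ‖x‖ ^ 2) := by
  have hsinh : sinh (k * t) ≠ 0 := sinh_ne_zero.2 (mul_ne_zero hk ht.ne')
  set y : E := (sinh (k * t))⁻¹ • x
  set γ₀ : ℝ → E := fun s => sinh (k * s) • y
  set v₀ : ℝ → E := fun s => (k * cosh (k * s)) • y
  have hγ₀ : ∀ s, HasDerivAt γ₀ (v₀ s) s := hasDerivAt_sinh_mul_smul k y
  have hv₀ : ∀ s, HasDerivAt v₀ (k ^ 2 • γ₀ s) s := hasDerivAt_mul_cosh_mul_smul k y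
  have hγ₀0 : γ₀ 0 = 0 := by simp [γ₀]
  have hγ₀t : γ₀ t = x := by simp [γ₀, y, smul_smul, hsinh]
  have haction : ∫ s in (0 : ℝ)..t, harmonicLagrangian k (v₀ s) (γ₀ s)
      = k * coth (k * t) / 2 * ‖x‖ ^ 2 := by
    rw [integral_harmonicLagrangian_of_eulerLagrange hγ₀ hv₀, hγ₀t, hγ₀0]
    simp only [v₀, y, inner_zero_right, sub_zero, smul_smul, real_inner_smul_left,
      real_inner_self_eq_norm_sq, coth]
    ring
  have hderiv : deriv γ₀ = v₀ := funext fun s => (hγ₀ s).deriv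
  refine ⟨⟨γ₀, ?_, hγ₀0, hγ₀t, by rw [hderiv, haction]⟩, ?_⟩
  · exact contDiff_one_iff_deriv.2 ⟨fun s => (hγ₀ s).differentiableAt,
      hderiv ▸ continuous_iff_continuousAt.2 fun s => (hv₀ s).continuousAt⟩
  · rintro a ⟨γ, hγ, hγ0, hγt, rfl⟩
    exact haction ▸ integral_harmonicLagrangian_le_of_eulerLagrange ht.le hγ₀ hv₀ hγ
      (hγ0.trans hγ₀0.symm) (hγt.trans hγ₀t.symm)

theorem fderiv_fderiv_const_mul_norm_sq (a : ℝ) (x v w : E) :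
    fderiv ℝ (fun y => fderiv ℝ (fun z : E => a * ‖z‖ ^ 2) y v) x w = 2 * a * inner ℝ v w := by
  have hfirst : (fun y => fderiv ℝ (fun z : E => a * ‖z‖ ^ 2) y v)
      = ⇑((2 * a) • innerSL ℝ v : E →L[ℝ] ℝ) := by
    ext y
    rw [((hasStrictFDerivAt_norm_sq y).hasFDerivAt.const_mul a).fderiv]
    simp only [smul_apply, coe_innerSL_apply, real_inner_comm v, nsmul_eq_mul, Nat.cast_ofNat,
      smul_eq_mul]
    ring
  rw [hfirst, ContinuousLinearMap.fderiv]
  simp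

end QuadraticCost

theorem lap_eq_of_fderiv_fderiv_eq_mul_inner {n : ℕ} {f : EuclideanSpace ℝ (Fin n) → ℝ}
    {x : EuclideanSpace ℝ (Fin n)} {μ : ℝ}
    (hf : ∀ v w, fderiv ℝ (fun y => fderiv ℝ f y v) x w = μ * inner ℝ v w) :
    lap n f x = n * μ := by
  simp [lap, hf]

theorem stmt10 (n : ℕ) (k : ℝ) (hk : 0 < k)
    (U₂ : EuclideanSpace ℝ (Fin n) → ℝ) (hU₂ : ∀ x, U₂ x = -(k ^ 2 / 2) * ‖x‖ ^ 2)
    (c : ℝ → EuclideanSpace ℝ (Fin n) → ℝ)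
    (hc : ∀ t x, c t x = sInf { a : ℝ | ∃ γ : ℝ → EuclideanSpace ℝ (Fin n),
      ContDiff ℝ 1 γ ∧ γ 0 = 0 ∧ γ t = x ∧
      a = ∫ s in (0 : ℝ)..t, ((1 / 2) * ‖deriv γ s‖ ^ 2 - U₂ (γ s)) }) :
    ∀ t, 0 < t → ∀ x,
      (∀ v w : EuclideanSpace ℝ (Fin n),
        fderiv ℝ (fun y => fderiv ℝ (c t) y v) x w = k * coth (k * t) * inner ℝ v w) ∧
      lap n (c t) x = k * n * coth (k * t) := by
  intro t ht x
  have hlagrangian : ∀ p q, 1 / 2 * ‖p‖ ^ 2 - U₂ q = harmonicLagrangian k p q := fun p q => by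
    rw [hU₂, harmonicLagrangian]; ring
  have hcost : c t = fun y => k * coth (k * t) / 2 * ‖y‖ ^ 2 := funext fun y => by
    rw [hc]
    simp only [hlagrangian]
    exact (isLeast_integral_harmonicLagrangian hk.ne' ht y).csInf_eq
  have hhess : ∀ v w : EuclideanSpace ℝ (Fin n),
      fderiv ℝ (fun y => fderiv ℝ (c t) y v) x w = k * coth (k * t) * inner ℝ v w :=
    fun v w => by rw [hcost, fderiv_fderiv_const_mul_norm_sq]; ring
  exact ⟨hhess, by rw [lap_eq_of_fderiv_fderiv_eq_mul_inner hhess]; ring⟩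
end

section
/- Let k > 0 and α ≥ 1. Define a₂(t) = (e^{kt} - e^{-kt})² and a₄(t) = -(nα^{3/2}k/2) coth(kt/√α) · a₂(t). Then the ratio a₄/a₂ satisfies the Riccati equation d/dt(a₄/a₂) - (2/(α²n))(a₄/a₂)² + (αnk²)/2 = 0, and moreover ȧ₂/a₂ + 4a₄/(nα² a₂) = 2k coth(kt) - (2k/√α) coth(kt/√α) ≥ 0 for all t > 0. -/
/-! Since `(e^x - e^(-x))² = 4 sinh² x`, the ratio `a₄ / a₂` is `-c coth (k t / √α)`, and
`coth' = 1 - coth²` makes `-c coth (l t)` a solution of `f' = (l / c) f² - c l`. The inequality is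
the monotonicity of `x coth x` on `(0, ∞)`, applied at `k t / √α ≤ k t`. -/

open Real Set Filter

lemma hasDerivAt_coth {x : ℝ} (hx : sinh x ≠ 0) : HasDerivAt coth (1 - coth x ^ 2) x := by
  refine ((hasDerivAt_cosh x).div (hasDerivAt_sinh x) hx).congr_deriv ?_
  simp only [coth]
  field_simp

lemma one_sub_coth_sq {x : ℝ} (hx : sinh x ≠ 0) : 1 - coth x ^ 2 = -1 / sinh x ^ 2 := by
  rw [coth, div_pow, cosh_sq]
  field_simp
  ring

lemma hasDerivAt_mul_coth {x : ℝ} (hx : 0 < x) :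
    HasDerivAt (fun y => y * coth y) ((cosh x * sinh x - x) / sinh x ^ 2) x := by
  have hs : sinh x ≠ 0 := (sinh_pos_iff.mpr hx).ne'
  refine ((hasDerivAt_id' x).mul (hasDerivAt_coth hs)).congr_deriv ?_
  rw [one_sub_coth_sq hs, coth]
  field_simp
  ring

/-- `x coth x` increases on `(0, ∞)`: its derivative has numerator `sinh (2x) / 2 - x > 0`. -/
lemma monotoneOn_mul_coth : MonotoneOn (fun x => x * coth x) (Ioi 0) := by
  refine (strictMonoOn_of_hasDerivWithinAt_pos (convex_Ioi 0)
    (fun x hx => (hasDerivAt_mul_coth hx).continuousAt.continuousWithinAt)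
    (fun x hx => (hasDerivAt_mul_coth (interior_subset hx)).hasDerivWithinAt)
    fun x hx => ?_).monotoneOn
  rw [interior_Ioi] at hx
  have hsinh : 2 * x < sinh (2 * x) := self_lt_sinh_iff.mpr (by simpa using hx)
  rw [sinh_two_mul] at hsinh
  have := sinh_pos_iff.mpr hx
  apply div_pos <;> nlinarith

lemma hasDerivAt_neg_mul_coth_mul {c l t : ℝ} (hc : c ≠ 0) (ht : sinh (l * t) ≠ 0) :
    HasDerivAt (fun s => -c * coth (l * s)) (l / c * (-c * coth (l * t)) ^ 2 - c * l) t := by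
  have hinner : HasDerivAt (fun s => l * s) l t := by simpa using (hasDerivAt_id t).const_mul l
  refine (((hasDerivAt_coth ht).comp t hinner).const_mul (-c)).congr_deriv ?_
  field_simp
  ring

lemma exp_sub_exp_neg_sq (x : ℝ) : (exp x - exp (-x)) ^ 2 = 4 * sinh x ^ 2 := by
  rw [sinh_eq]
  ring

lemma deriv_sinh_sq_div {k t : ℝ} (ht : sinh (k * t) ≠ 0) :
    deriv (fun s => 4 * sinh (k * s) ^ 2) t / (4 * sinh (k * t) ^ 2) = 2 * k * coth (k * t) := by
  have hinner : HasDerivAt (fun s => k * s) k t := by simpa using (hasDerivAt_id t).const_mul k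
  have hderiv : HasDerivAt (fun s => 4 * sinh (k * s) ^ 2)
      (4 * (2 * sinh (k * t) * (cosh (k * t) * k))) t := by
    simpa using (((hasDerivAt_sinh _).comp t hinner).pow 2).const_mul 4
  rw [hderiv.deriv, coth]
  field_simp

lemma div_mul_coth_div_le_mul_coth {k t s : ℝ} (hk : 0 < k) (ht : 0 < t) (hs : 1 ≤ s) :
    k / s * coth (k * t / s) ≤ k * coth (k * t) := by
  have hkt : 0 < k * t := mul_pos hk ht
  have h := monotoneOn_mul_coth (div_pos hkt (by linarith)) hkt (div_le_self hkt.le hs)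
  refine le_of_mul_le_mul_right ?_ ht
  convert h using 1 <;> ring

theorem stmt13 (n : ℕ) (hn : 1 ≤ n) (k α : ℝ) (hk : 0 < k) (hα : 1 ≤ α)
    (a2 a4 : ℝ → ℝ)
    (ha2 : ∀ t, a2 t = (Real.exp (k * t) - Real.exp (-(k * t))) ^ 2)
    (ha4 : ∀ t, a4 t = -((n : ℝ) * α ^ ((3 : ℝ) / 2) * k / 2) * coth (k * t / Real.sqrt α) * a2 t) :
    ∀ t, 0 < t →
      HasDerivAt (fun s => a4 s / a2 s)
        ((2 / (α ^ 2 * n)) * (a4 t / a2 t) ^ 2 - α * n * k ^ 2 / 2) t ∧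
      deriv a2 t / a2 t + 4 * a4 t / (n * α ^ 2 * a2 t) =
        2 * k * coth (k * t) - (2 * k / Real.sqrt α) * coth (k * t / Real.sqrt α) ∧
      0 ≤ 2 * k * coth (k * t) - (2 * k / Real.sqrt α) * coth (k * t / Real.sqrt α) := by
  intro t ht
  obtain ⟨σ, hσ, rfl⟩ : ∃ σ, 1 ≤ σ ∧ α = σ ^ 2 :=
    ⟨√α, one_le_sqrt.mpr hα, (sq_sqrt (by linarith)).symm⟩
  have hσ0 : 0 < σ := by linarith
  have hsqrt : √(σ ^ 2) = σ := sqrt_sq hσ0.le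
  have hpow : (σ ^ 2) ^ ((3 : ℝ) / 2) = σ ^ 3 := by
    rw [rpow_div_two_eq_sqrt 3 (by positivity), hsqrt]
    norm_cast
  simp only [hsqrt, hpow] at ha4 ⊢
  set c : ℝ := n * σ ^ 3 * k / 2
  have hc : c ≠ 0 := by
    have : (0 : ℝ) < n := by exact_mod_cast hn
    positivity
  have hsinh : ∀ s, 0 < s → sinh (k * s) ≠ 0 := fun s hs => (sinh_pos_iff.mpr (by positivity)).ne'
  have ha2_eq : a2 = fun s => 4 * sinh (k * s) ^ 2 :=
    funext fun s => by rw [ha2, exp_sub_exp_neg_sq]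
  have hratio : ∀ s, 0 < s → a4 s / a2 s = -c * coth (k / σ * s) := fun s hs => by
    have : a2 s ≠ 0 := by rw [ha2_eq]; exact mul_ne_zero four_ne_zero (pow_ne_zero 2 (hsinh s hs))
    rw [ha4, mul_div_assoc, div_self this, mul_one, div_mul_eq_mul_div]
  refine ⟨?_, ?_, ?_⟩
  · have hl : sinh (k / σ * t) ≠ 0 := (sinh_pos_iff.mpr (by positivity)).ne'
    refine ((hasDerivAt_neg_mul_coth_mul hc hl).congr_of_eventuallyEq ?_).congr_deriv ?_
    · filter_upwards [Ioi_mem_nhds ht] with s hs using hratio s hs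
    · rw [hratio t ht]
      field_simp
      ring
  · rw [show 4 * a4 t / (n * (σ ^ 2) ^ 2 * a2 t) = 4 / (n * (σ ^ 2) ^ 2) * (a4 t / a2 t) by ring,
      hratio t ht, ha2_eq, deriv_sinh_sq_div (hsinh t ht), div_mul_eq_mul_div k σ t]
    field_simp
    ring
  · linear_combination 2 * div_mul_coth_div_le_mul_coth hk ht hσ
end

section
/- Let A : [t₀,t₁] → GL_n(ℝ) be C¹ with det A(t) > 0, and suppose tr(A(t)^{-1}A'(t)) ≤ f(t) for all t, where f is continuous. Then det A(t₁)/det A(t₀) ≤ exp(∫_{t₀}^{t₁} f(t) dt). In particular, if f(t) = (1/c)·a_K(t) with c > 0, then det A(t₁)/det A(t₀) ≤ (b_K(t₁)/b_K(t₀))^{1/c}, where b_K' = a_K b_K. -/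
open Real Set Filter

noncomputable def aK (K t : ℝ) : ℝ :=
  if 0 < K then Real.sqrt K * Real.cot (Real.sqrt K * t)
  else if K = 0 then 1 / t
  else Real.sqrt (-K) * coth (Real.sqrt (-K) * t)

noncomputable def bK (K t : ℝ) : ℝ :=
  if 0 < K then Real.sin (Real.sqrt K * t) / Real.sqrt K
  else if K = 0 then t
  else Real.sinh (Real.sqrt (-K) * t) / Real.sqrt (-K)

/-! Jacobi's formula `(det A)' = tr(adj A · A')` gives `(log det A)' = tr(A⁻¹A') ≤ f`, and the
mean-value form of the fundamental theorem of calculus turns this into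
`log det A(t₁) - log det A(t₀) ≤ ∫ f`. For `f = a_K / c` the integral is computed from
`(log b_K)' = a_K`. -/

namespace Matrix

variable {n α : Type*} [Fintype n] [DecidableEq n]

theorem det_updateRow_eq_sum_mul_adjugate [CommRing α] (A : Matrix n n α) (i : n) (b : n → α) :
    (A.updateRow i b).det = ∑ k, b k * A.adjugate k i := by
  rw [← cramer_transpose_apply, cramer_eq_adjugate_mulVec, ← adjugate_transpose]
  simp only [mulVec, dotProduct, transpose_apply, mul_comm]

theorem sum_det_updateRow_eq_trace_adjugate_mul [CommRing α] (A N : Matrix n n α) :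
    ∑ i, (A.updateRow i (N i)).det = trace (A.adjugate * N) := by
  simp only [det_updateRow_eq_sum_mul_adjugate, trace, diag, mul_apply]
  rw [Finset.sum_comm]
  exact Finset.sum_congr rfl fun _ _ => Finset.sum_congr rfl fun _ _ => mul_comm _ _

theorem hasDerivAt_det {𝕜 : Type*} [NontriviallyNormedField 𝕜] {M : 𝕜 → Matrix n n 𝕜}
    {N : Matrix n n 𝕜} {t : 𝕜} (h : ∀ i j, HasDerivAt (fun s => M s i j) (N i j) t) :
    HasDerivAt (fun s => (M s).det) (trace ((M t).adjugate * N)) t := by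
  let D : ContinuousMultilinearMap 𝕜 (fun _ : n => n → 𝕜) 𝕜 :=
    ⟨detRowAlternating.toMultilinearMap, continuous_id.matrix_det⟩
  have hM : HasDerivAt (fun s => (M s : n → n → 𝕜)) N t :=
    hasDerivAt_pi.2 fun i => hasDerivAt_pi.2 fun j => h i j
  rw [← sum_det_updateRow_eq_trace_adjugate_mul]
  exact ((D.hasFDerivAt (M t)).comp_hasDerivAt t hM).congr_deriv (D.linearDeriv_apply _ _)

theorem hasDerivAt_log_det {M : ℝ → Matrix n n ℝ} {N : Matrix n n ℝ} {t : ℝ}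
    (h : ∀ i j, HasDerivAt (fun s => M s i j) (N i j) t) (hdet : (M t).det ≠ 0) :
    HasDerivAt (fun s => log (M s).det) (trace ((M t)⁻¹ * N)) t := by
  convert (hasDerivAt_det h).log hdet using 1
  rw [inv_def, smul_mul, trace_smul, smul_eq_mul, Ring.inverse_eq_inv', div_eq_inv_mul]

end Matrix

theorem det_div_det_le_exp_integral {n : Type*} [Fintype n] [DecidableEq n]
    {A A' : ℝ → Matrix n n ℝ} {f : ℝ → ℝ} {a b : ℝ} (hab : a ≤ b)
    (hf : MeasureTheory.IntegrableOn f (Icc a b))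
    (hA : ∀ t ∈ Icc a b, ∀ i j, HasDerivAt (fun s => A s i j) (A' t i j) t)
    (hdet : ∀ t ∈ Icc a b, 0 < (A t).det)
    (htr : ∀ t ∈ Ioo a b, Matrix.trace ((A t)⁻¹ * A' t) ≤ f t) :
    (A b).det / (A a).det ≤ exp (∫ t in a..b, f t) := by
  have hlog : ∀ t ∈ Icc a b,
      HasDerivAt (fun s => log (A s).det) (Matrix.trace ((A t)⁻¹ * A' t)) t := fun t ht =>
    Matrix.hasDerivAt_log_det (hA t ht) (hdet t ht).ne'
  have hle : log (A b).det - log (A a).det ≤ ∫ t in a..b, f t :=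
    intervalIntegral.sub_le_integral_of_hasDeriv_right_of_le hab
      (fun t ht => (hlog t ht).continuousAt.continuousWithinAt)
      (fun t ht => (hlog t (Ioo_subset_Icc_self ht)).hasDerivWithinAt) hf htr
  have ha := hdet a (left_mem_Icc.2 hab)
  have hb := hdet b (right_mem_Icc.2 hab)
  rw [← log_le_iff_le_exp (div_pos hb ha), log_div hb.ne' ha.ne']
  exact hle

theorem bK_pos {K t : ℝ} (ht : 0 < t) (hK : 0 < K → √K * t < π) : 0 < bK K t := by
  rcases lt_trichotomy 0 K with hK₀ | rfl | hK₀
  · have hs := sqrt_pos.2 hK₀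
    rw [bK, if_pos hK₀]
    exact div_pos (sin_pos_of_pos_of_lt_pi (mul_pos hs ht) (hK hK₀)) hs
  · simpa [bK] using ht
  · have hs := sqrt_pos.2 (neg_pos.2 hK₀)
    rw [bK, if_neg (not_lt.2 hK₀.le), if_neg hK₀.ne]
    exact div_pos (sinh_pos_iff.2 (mul_pos hs ht)) hs

theorem hasDerivAt_log_bK {K t : ℝ} (ht : 0 < t) (hK : 0 < K → √K * t < π) :
    HasDerivAt (fun s => log (bK K s)) (aK K t) t := by
  rcases lt_trichotomy 0 K with hK₀ | rfl | hK₀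
  · have hs := sqrt_pos.2 hK₀
    have hsin : sin (√K * t) ≠ 0 := (sin_pos_of_pos_of_lt_pi (mul_pos hs ht) (hK hK₀)).ne'
    simp only [bK, aK, if_pos hK₀]
    convert (((hasDerivAt_id' t).const_mul √K).sin.div_const √K).log
      (div_ne_zero hsin hs.ne') using 1
    rw [cot_eq_cos_div_sin]
    field_simp
  · simpa [bK, aK] using hasDerivAt_log ht.ne'
  · have hs := sqrt_pos.2 (neg_pos.2 hK₀)
    have hsinh : sinh (√(-K) * t) ≠ 0 := (sinh_pos_iff.2 (mul_pos hs ht)).ne'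
    simp only [bK, aK, if_neg (not_lt.2 hK₀.le), if_neg hK₀.ne]
    convert (((hasDerivAt_id' t).const_mul √(-K)).sinh.div_const √(-K)).log
      (div_ne_zero hsinh hs.ne') using 1
    rw [coth]
    field_simp

theorem continuousAt_aK {K t : ℝ} (ht : 0 < t) (hK : 0 < K → √K * t < π) :
    ContinuousAt (aK K) t := by
  rcases lt_trichotomy 0 K with hK₀ | rfl | hK₀
  · have hsin : sin (√K * t) ≠ 0 :=
      (sin_pos_of_pos_of_lt_pi (mul_pos (sqrt_pos.2 hK₀) ht) (hK hK₀)).ne'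
    unfold aK
    simp only [if_pos hK₀, cot_eq_cos_div_sin]
    fun_prop (disch := exact hsin)
  · unfold aK
    simp only [lt_irrefl, if_false, if_true]
    fun_prop (disch := exact ht.ne')
  · have hsinh : sinh (√(-K) * t) ≠ 0 :=
      (sinh_pos_iff.2 (mul_pos (sqrt_pos.2 (neg_pos.2 hK₀)) ht)).ne'
    unfold aK coth
    simp only [if_neg (not_lt.2 hK₀.le), if_neg hK₀.ne]
    fun_prop (disch := exact hsinh)

theorem sqrt_mul_lt_pi_of_le {K t b : ℝ} (htb : t ≤ b) (hK : 0 < K → b < π / √K) :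
    0 < K → √K * t < π := fun hK₀ =>
  calc √K * t ≤ √K * b := by gcongr
    _ < π := (lt_div_iff₀' (sqrt_pos.2 hK₀)).1 (hK hK₀)

theorem integral_aK {K a b : ℝ} (ha : 0 < a) (hab : a ≤ b) (hK : 0 < K → b < π / √K) :
    ∫ t in a..b, aK K t = log (bK K b) - log (bK K a) := by
  have hmem : ∀ t ∈ uIcc a b, a ≤ t ∧ t ≤ b := fun t ht => by rwa [uIcc_of_le hab] at ht
  exact intervalIntegral.integral_eq_sub_of_hasDerivAt
    (fun t ht => hasDerivAt_log_bK (ha.trans_le (hmem t ht).1)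
      (sqrt_mul_lt_pi_of_le (hmem t ht).2 hK))
    (ContinuousOn.intervalIntegrable fun t ht =>
      (continuousAt_aK (ha.trans_le (hmem t ht).1)
        (sqrt_mul_lt_pi_of_le (hmem t ht).2 hK)).continuousWithinAt)

theorem stmt17_general (n : ℕ) (t₀ t₁ : ℝ) (ht₀ : 0 < t₀) (ht : t₀ < t₁)
    (A A' : ℝ → Matrix (Fin n) (Fin n) ℝ) (f : ℝ → ℝ) (hf : Continuous f)
    (hA : ∀ t ∈ Icc t₀ t₁, ∀ i j, HasDerivAt (fun s => A s i j) (A' t i j) t)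
    (hdet : ∀ t ∈ Icc t₀ t₁, 0 < (A t).det)
    (htr : ∀ t ∈ Icc t₀ t₁, Matrix.trace ((A t)⁻¹ * A' t) ≤ f t) :
    (A t₁).det / (A t₀).det ≤ Real.exp (∫ t in t₀..t₁, f t) ∧
    (∀ K c : ℝ, 0 < c → (0 < K → t₁ < π / Real.sqrt K) →
      (∀ t ∈ Icc t₀ t₁, f t = (1 / c) * aK K t) →
      (A t₁).det / (A t₀).det ≤ (bK K t₁ / bK K t₀) ^ (1 / c)) := by
  have hratio : (A t₁).det / (A t₀).det ≤ exp (∫ t in t₀..t₁, f t) :=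
    det_div_det_le_exp_integral ht.le hf.integrableOn_Icc hA hdet
      fun t hmem => htr t (Ioo_subset_Icc_self hmem)
  refine ⟨hratio, fun K c _ hK hfK => ?_⟩
  have hb₀ : 0 < bK K t₀ := bK_pos ht₀ (sqrt_mul_lt_pi_of_le ht.le hK)
  have hb₁ : 0 < bK K t₁ := bK_pos (ht₀.trans ht) (sqrt_mul_lt_pi_of_le le_rfl hK)
  have hf_int : ∫ t in t₀..t₁, f t = 1 / c * log (bK K t₁ / bK K t₀) := by
    rw [intervalIntegral.integral_congr (g := fun t => 1 / c * aK K t)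
        (fun t hmem => hfK t (by rwa [uIcc_of_le ht.le] at hmem)),
      intervalIntegral.integral_const_mul, integral_aK ht₀ ht.le hK, log_div hb₁.ne' hb₀.ne']
  rwa [hf_int, mul_comm, ← rpow_def_of_pos (div_pos hb₁ hb₀)] at hratio

theorem stmt17 (n : ℕ) (t₀ t₁ : ℝ) (ht₀ : 0 < t₀) (ht : t₀ < t₁)
    (A A' : ℝ → Matrix (Fin n) (Fin n) ℝ) (f : ℝ → ℝ) (hf : Continuous f)
    (hA : ∀ t ∈ Icc t₀ t₁, ∀ i j, HasDerivAt (fun s => A s i j) (A' t i j) t)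
    (hA' : ∀ i j, ContinuousOn (fun t => A' t i j) (Icc t₀ t₁))
    (hdet : ∀ t ∈ Icc t₀ t₁, 0 < (A t).det)
    (htr : ∀ t ∈ Icc t₀ t₁, Matrix.trace ((A t)⁻¹ * A' t) ≤ f t) :
    (A t₁).det / (A t₀).det ≤ Real.exp (∫ t in t₀..t₁, f t) ∧
    (∀ K c : ℝ, 0 < c → (0 < K → t₁ < π / Real.sqrt K) →
      (∀ t ∈ Icc t₀ t₁, f t = (1 / c) * aK K t) →
      (A t₁).det / (A t₀).det ≤ (bK K t₁ / bK K t₀) ^ (1 / c)) :=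
  stmt17_general n t₀ t₁ ht₀ ht A A' f hf hA hdet htr
end
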